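/- arXiv:2501.15893 — 5 statements merged into one kernel-verified Lean document; each statement's English description precedes it below -/
import Mathlib

section
/- Assume that P_t ≠ δ for every t = 1,…,T. Then the empirical sample complexity Ŝ^{(N)} is a consistent estimator of the sample complexity S: for every η > 0, lim_{N→∞} P(|Ŝ^{(N)} − S| > η) = 0. -/
open MeasureTheory ProbabilityTheory Filter Topology Finset Function

/-! By the strong law of large numbers, each empirical frequency `P̂ₜ⁽ᴺ⁾` converges almost surely
to `Pₜ`. As `Pₜ ≠ δ`, the step function `x ↦ 𝟙[x < δ]` is continuous at `Pₜ`, so `Ŝ⁽ᴺ⁾` converges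
almost surely to `S`, and almost sure convergence implies convergence in probability. -/

theorem continuousAt_ite_lt_const {α β : Type*} [LinearOrder α] [TopologicalSpace α]
    [OrderClosedTopology α] [TopologicalSpace β] {δ p : α} (hp : p ≠ δ) (a b : β) :
    ContinuousAt (fun x => if x < δ then a else b) p := by
  rcases hp.lt_or_gt with hlt | hgt
  · exact continuousAt_const.congr <| eventually_of_mem (Iio_mem_nhds hlt) fun x hx =>
      (if_pos hx).symm
  · exact continuousAt_const.congr <| eventually_of_mem (Ioi_mem_nhds hgt) fun x hx =>
      (if_neg hx.not_gt).symm

theorem Finset.sum_Icc_one_eq_sum_range {M : Type*} [AddCommMonoid M] (f : ℕ → M) (n : ℕ) :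
    ∑ i ∈ Icc 1 n, f i = ∑ i ∈ range n, f (i + 1) := by
  rw [range_eq_Ico, sum_Ico_add', ← Ico_add_one_right_eq_Icc, zero_add]

theorem tendsto_ae_empirical_frequency {Ω E : Type*} [MeasurableSpace Ω] {μ : Measure Ω}
    [IsFiniteMeasure μ] [MeasurableSpace E] {X : ℕ → Ω → E} (hX : Measurable (X 0))
    (hindep : Pairwise ((· ⟂ᵢ[μ] ·) on X)) (hident : ∀ i, IdentDistrib (X i) (X 0) μ μ)
    {s : Set E} (hs : MeasurableSet s) :
    ∀ᵐ ω ∂μ, Tendsto (fun n : ℕ => (∑ i ∈ range n, s.indicator 1 (X i ω)) / (n : ℝ)) atTop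
      (𝓝 (μ.real (X 0 ⁻¹' s))) := by
  have hind : Measurable (s.indicator (1 : E → ℝ)) := measurable_const.indicator hs
  have hcomp : s.indicator (1 : E → ℝ) ∘ X 0 = (X 0 ⁻¹' s).indicator 1 :=
    funext fun _ => (Set.indicator_comp_right _).symm
  have hint : Integrable (s.indicator (1 : E → ℝ) ∘ X 0) μ :=
    hcomp ▸ (integrable_const 1).indicator (hX hs)
  have hmean : μ[s.indicator (1 : E → ℝ) ∘ X 0] = μ.real (X 0 ⁻¹' s) := by
    rw [hcomp, integral_indicator_one (hX hs)]
  have hlln := strong_law_ae_real (fun i => s.indicator 1 ∘ X i) hint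
    (fun i j hij => (hindep hij).comp hind hind) fun i => (hident i).comp hind
  rwa [hmean] at hlln

theorem tendsto_ae_empirical_frequency_ge {Ω : Type*} [MeasurableSpace Ω] {μ : Measure Ω}
    [IsFiniteMeasure μ] {X : ℕ → Ω → ℝ} (hX : Measurable (X 1)) (hindep : iIndepFun X μ)
    (hident : ∀ i, IdentDistrib (X i) (X 1) μ μ) (a : ℝ) :
    ∀ᵐ ω ∂μ, Tendsto (fun N : ℕ => (1 / (N : ℝ)) * ∑ i ∈ Icc 1 N, if a ≤ X i ω then 1 else 0)
      atTop (𝓝 (μ {ω | a ≤ X 1 ω}).toReal) := by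
  have hlln := tendsto_ae_empirical_frequency (X := fun i => X (i + 1)) hX
    (fun i j hij => hindep.indepFun (by omega)) (fun i => hident (i + 1))
    (measurableSet_Ici (a := a))
  filter_upwards [hlln] with ω hω
  simp_rw [sum_Icc_one_eq_sum_range, one_div_mul_eq_div]
  simp only [Set.indicator_apply, Set.mem_Ici, Pi.one_apply] at hω
  exact hω

theorem tendsto_measureReal_lt_dist_of_tendsto_ae {Ω E : Type*} [MeasurableSpace Ω]
    {μ : Measure Ω} [IsFiniteMeasure μ] [PseudoMetricSpace E] {f : ℕ → Ω → E} {g : Ω → E}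
    (hf : ∀ n, AEStronglyMeasurable (f n) μ) (hfg : ∀ᵐ ω ∂μ, Tendsto (f · ω) atTop (𝓝 (g ω)))
    {ε : ℝ} (hε : 0 < ε) :
    Tendsto (fun n => μ.real {ω | ε < dist (f n ω) (g ω)}) atTop (𝓝 0) :=
  tendsto_of_tendsto_of_tendsto_of_le_of_le tendsto_const_nhds
    (tendstoInMeasure_iff_measureReal_dist.1 (tendstoInMeasure_of_tendsto_ae hf hfg) ε hε)
    (fun _ => measureReal_nonneg) fun _ => measureReal_mono fun _ => le_of_lt (α := ℝ)

theorem empirical_sample_complexity_consistent_general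
    {Ω : Type*} [MeasurableSpace Ω] (μ : Measure Ω) [IsProbabilityMeasure μ]
    (T : ℕ) (Vstar : ℝ) (δ : ℝ)
    (V : ℕ → ℕ → Ω → ℝ)
    (hmeas : ∀ t i, Measurable (V t i))
    (hindep : ∀ t ∈ Finset.Icc 1 T,
      iIndepFun (V t) μ)
    (hident : ∀ t ∈ Finset.Icc 1 T, ∀ i j : ℕ, IdentDistrib (V t i) (V t j) μ μ)
    (P : ℕ → ℝ) (hP : ∀ t, P t = (μ {ω | Vstar ≤ V t 1 ω}).toReal)
    (Phat : ℕ → ℕ → Ω → ℝ)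
    (hPhat : ∀ t N ω, Phat t N ω
      = (1 / (N : ℝ)) * ∑ i ∈ Finset.Icc 1 N, (if Vstar ≤ V t i ω then (1 : ℝ) else 0))
    (S : ℝ) (hS : S = ∑ t ∈ Finset.Icc 1 T, (if P t < δ then (1 : ℝ) else 0))
    (Shat : ℕ → Ω → ℝ)
    (hShat : ∀ N ω, Shat N ω
      = ∑ t ∈ Finset.Icc 1 T, (if Phat t N ω < δ then (1 : ℝ) else 0))
    (hne : ∀ t ∈ Finset.Icc 1 T, P t ≠ δ)
    (η : ℝ) (hη : 0 < η) :
    Tendsto (fun N : ℕ => (μ {ω | η < |Shat N ω - S|}).toReal) atTop (nhds 0) := by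
  have hPhat_lim : ∀ t ∈ Icc 1 T, ∀ᵐ ω ∂μ, Tendsto (Phat t · ω) atTop (𝓝 (P t)) := fun t ht => by
    simpa only [hPhat, hP] using tendsto_ae_empirical_frequency_ge (hmeas t 1) (hindep t ht)
      (fun i => hident t ht i 1) Vstar
  have hShat_lim : ∀ᵐ ω ∂μ, Tendsto (Shat · ω) atTop (𝓝 S) := by
    filter_upwards [(ae_ball_iff (Icc 1 T).countable_toSet).2 hPhat_lim] with ω hω
    simp only [hShat, hS]
    exact tendsto_finsetSum _ fun t ht =>
      (continuousAt_ite_lt_const (hne t ht) 1 0).tendsto.comp (hω t ht)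
  have hPhat_meas : ∀ t N, Measurable (Phat t N) := fun t N => by
    rw [funext (hPhat t N)]
    exact (measurable_sum _ fun i _ => Measurable.ite
      (measurableSet_le measurable_const (hmeas t i)) measurable_const measurable_const).const_mul _
  have hShat_meas : ∀ N, Measurable (Shat N) := fun N => by
    rw [funext (hShat N)]
    exact measurable_sum _ fun t _ => Measurable.ite
      (measurableSet_lt (hPhat_meas t N) measurable_const) measurable_const measurable_const
  simpa only [Real.dist_eq, measureReal_def] using tendsto_measureReal_lt_dist_of_tendsto_ae
    (fun N => (hShat_meas N).aestronglyMeasurable) hShat_lim hη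

/-- **Consistency of the empirical sample complexity estimator.**
Fix `T : ℕ`, a threshold `Vstar : ℝ` and `δ ∈ (0,1]`. For each `t = 1,…,T`, the
random variables `(V t i)_{i ∈ ℕ}` are i.i.d.  With
`P t = ℙ(V t 1 ≥ Vstar)`, `P̂ₜ⁽ᴺ⁾ = (1/N) ∑_{i=1}^N 𝟙[V t i ≥ Vstar]`,
`S = ∑_{t=1}^T 𝟙[P t < δ]`, and `Ŝ⁽ᴺ⁾ = ∑_{t=1}^T 𝟙[P̂ₜ⁽ᴺ⁾ < δ]`,
if `P t ≠ δ` for all `t = 1,…,T`, then for every `η > 0` we have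
`P(|Ŝ⁽ᴺ⁾ − S| > η) → 0` as `N → ∞`. -/
theorem empirical_sample_complexity_consistent
    {Ω : Type*} [MeasurableSpace Ω] (μ : Measure Ω) [IsProbabilityMeasure μ]
    (T : ℕ) (Vstar : ℝ) (δ : ℝ) (hδ : δ ∈ Set.Ioc (0 : ℝ) 1)
    (V : ℕ → ℕ → Ω → ℝ)
    (hmeas : ∀ t i, Measurable (V t i))
    (hindep : ∀ t ∈ Finset.Icc 1 T,
      iIndepFun (V t) μ)
    (hident : ∀ t ∈ Finset.Icc 1 T, ∀ i j : ℕ, IdentDistrib (V t i) (V t j) μ μ)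
    (P : ℕ → ℝ) (hP : ∀ t, P t = (μ {ω | Vstar ≤ V t 1 ω}).toReal)
    (Phat : ℕ → ℕ → Ω → ℝ)
    (hPhat : ∀ t N ω, Phat t N ω
      = (1 / (N : ℝ)) * ∑ i ∈ Finset.Icc 1 N, (if Vstar ≤ V t i ω then (1 : ℝ) else 0))
    (S : ℝ) (hS : S = ∑ t ∈ Finset.Icc 1 T, (if P t < δ then (1 : ℝ) else 0))
    (Shat : ℕ → Ω → ℝ)
    (hShat : ∀ N ω, Shat N ω
      = ∑ t ∈ Finset.Icc 1 T, (if Phat t N ω < δ then (1 : ℝ) else 0))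
    (hne : ∀ t ∈ Finset.Icc 1 T, P t ≠ δ)
    (η : ℝ) (hη : 0 < η) :
    Tendsto (fun N : ℕ => (μ {ω | η < |Shat N ω - S|}).toReal) atTop (nhds 0) :=
  empirical_sample_complexity_consistent_general μ T Vstar δ V hmeas hindep hident P hP Phat hPhat S
    hS Shat hShat hne η hη
end

section
/- For every η > 0 and every N ∈ ℕ, the deviation probability of the empirical sample complexity is bounded by P(|Ŝ^{(N)} − S| > η) ≤ (1/η)·∑_{t=1}^{T} |P(P̂_t^{(N)} < δ) − 𝟙[P_t < δ]|. -/
/-! Pointwise, `Ŝ − S = ∑ₜ (𝟙[P̂ₜ < δ] − 𝟙[Pₜ < δ])`, so `|Ŝ − S|` is dominated by the sum of the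
absolute deviations, and Markov's inequality applies to that sum. Since the constant `𝟙[Pₜ < δ]`
is `0` or `1`, the absolute deviation of the indicator of `{P̂ₜ < δ}` from it is again an indicator
(of that event or of its complement), so its expectation is exactly `|P(P̂ₜ < δ) − 𝟙[Pₜ < δ]|`. -/

open MeasureTheory ProbabilityTheory

section

variable {Ω : Type*} [MeasurableSpace Ω] {μ : Measure Ω}

theorem measureReal_lt_le_inv_mul_integral_of_le [IsFiniteMeasure μ] {f g : Ω → ℝ}
    (hfg : ∀ ω, f ω ≤ g ω) (hg : Integrable g μ) (hg_nonneg : 0 ≤ᵐ[μ] g) {η : ℝ} (hη : 0 < η) :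
    μ.real {ω | η < f ω} ≤ (1 / η) * ∫ ω, g ω ∂μ := by
  have hmono : μ.real {ω | η < f ω} ≤ μ.real {ω | η ≤ g ω} :=
    measureReal_mono fun ω hω => (le_of_lt hω).trans (hfg ω)
  have hmarkov := mul_meas_ge_le_integral_of_nonneg hg_nonneg hg η
  rw [one_div_mul_eq_div, le_div_iff₀ hη, mul_comm]
  exact (mul_le_mul_of_nonneg_left hmono hη.le).trans hmarkov

theorem integrable_abs_indicator_one_sub [IsFiniteMeasure μ] {s : Set Ω} (hs : MeasurableSet s)
    (c : ℝ) : Integrable (fun ω => |s.indicator 1 ω - c|) μ :=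
  (((integrable_const 1).indicator hs).sub (integrable_const c)).abs

theorem integral_abs_indicator_one_sub_ite [IsProbabilityMeasure μ] {s : Set Ω}
    (hs : MeasurableSet s) (p : Prop) [Decidable p] :
    ∫ ω, |s.indicator 1 ω - (if p then 1 else 0)| ∂μ = |μ.real s - (if p then 1 else 0)| := by
  split_ifs
  · have hcompl : (fun ω => |s.indicator (1 : Ω → ℝ) ω - 1|) = sᶜ.indicator 1 := by
      ext ω
      by_cases hω : ω ∈ s <;> simp [hω]
    rw [hcompl, integral_indicator_one hs.compl, probReal_compl_eq_one_sub hs, abs_sub_comm,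
      abs_of_nonneg (sub_nonneg.2 measureReal_le_one)]
  · have hind : (fun ω => |s.indicator (1 : Ω → ℝ) ω - 0|) = s.indicator 1 := by
      ext ω
      by_cases hω : ω ∈ s <;> simp [hω]
    rw [hind, integral_indicator_one hs, sub_zero, abs_of_nonneg measureReal_nonneg]

end

theorem empirical_sample_complexity_deviation_bound_general
    {Ω : Type*} [MeasurableSpace Ω] (μ : Measure Ω) [IsProbabilityMeasure μ]
    (T : ℕ) (Vstar : ℝ) (δ : ℝ)
    (V : ℕ → ℕ → Ω → ℝ)
    (hmeas : ∀ t i, Measurable (V t i))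
    (P : ℕ → ℝ)
    (Phat : ℕ → ℕ → Ω → ℝ)
    (hPhat : ∀ t N ω, Phat t N ω
      = (1 / (N : ℝ)) * ∑ i ∈ Finset.Icc 1 N, (if Vstar ≤ V t i ω then (1 : ℝ) else 0))
    (S : ℝ) (hS : S = ∑ t ∈ Finset.Icc 1 T, (if P t < δ then (1 : ℝ) else 0))
    (Shat : ℕ → Ω → ℝ)
    (hShat : ∀ N ω, Shat N ω
      = ∑ t ∈ Finset.Icc 1 T, (if Phat t N ω < δ then (1 : ℝ) else 0))
    (η : ℝ) (hη : 0 < η) (N : ℕ) :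
    (μ {ω | η < |Shat N ω - S|}).toReal
      ≤ (1 / η) * ∑ t ∈ Finset.Icc 1 T,
          |(μ {ω | Phat t N ω < δ}).toReal - (if P t < δ then (1 : ℝ) else 0)| := by
  set A : ℕ → Set Ω := fun t => {ω | Phat t N ω < δ}
  have hA : ∀ t, MeasurableSet (A t) := fun t => by
    have hPhat_meas : Measurable (Phat t N) := by
      rw [funext (hPhat t N)]
      exact (Finset.measurable_sum _ fun i _ => (measurable_const.indicator
        (measurableSet_le measurable_const (hmeas t i)))).const_mul _
    exact measurableSet_lt hPhat_meas measurable_const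
  have hdev : ∀ ω, |Shat N ω - S|
      ≤ ∑ t ∈ Finset.Icc 1 T, |(A t).indicator 1 ω - (if P t < δ then (1 : ℝ) else 0)| := by
    intro ω
    rw [hShat, hS, ← Finset.sum_sub_distrib]
    simpa only [A, Set.indicator_apply, Set.mem_ofPred_eq, Pi.one_apply]
      using Finset.abs_sum_le_sum_abs _ _
  calc (μ {ω | η < |Shat N ω - S|}).toReal
      ≤ (1 / η) * ∫ ω, ∑ t ∈ Finset.Icc 1 T,
          |(A t).indicator 1 ω - (if P t < δ then (1 : ℝ) else 0)| ∂μ :=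
        measureReal_lt_le_inv_mul_integral_of_le hdev
          (integrable_finsetSum _ fun t _ => integrable_abs_indicator_one_sub (hA t) _)
          (ae_of_all μ fun ω => Finset.sum_nonneg fun t _ => abs_nonneg _) hη
    _ = _ := by
        rw [integral_finsetSum _ fun t _ => integrable_abs_indicator_one_sub (hA t) _]
        simp only [integral_abs_indicator_one_sub_ite (hA _), measureReal_def, A]

/-- **Deviation bound for the empirical sample complexity.**
With `P t = ℙ(V t 1 ≥ Vstar)`, `P̂ₜ⁽ᴺ⁾ = (1/N) ∑_{i=1}^N 𝟙[V t i ≥ Vstar]`,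
`S = ∑_{t=1}^T 𝟙[P t < δ]`, and `Ŝ⁽ᴺ⁾ = ∑_{t=1}^T 𝟙[P̂ₜ⁽ᴺ⁾ < δ]`, for every
`η > 0` and every `N`,
`P(|Ŝ⁽ᴺ⁾ − S| > η) ≤ (1/η) ∑_{t=1}^T |P(P̂ₜ⁽ᴺ⁾ < δ) − 𝟙[P t < δ]|`. -/
theorem empirical_sample_complexity_deviation_bound
    {Ω : Type*} [MeasurableSpace Ω] (μ : Measure Ω) [IsProbabilityMeasure μ]
    (T : ℕ) (Vstar : ℝ) (δ : ℝ) (hδ : δ ∈ Set.Ioc (0 : ℝ) 1)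
    (V : ℕ → ℕ → Ω → ℝ)
    (hmeas : ∀ t i, Measurable (V t i))
    (hindep : ∀ t ∈ Finset.Icc 1 T,
      iIndepFun (m := fun _ : ℕ => (inferInstance : MeasurableSpace ℝ)) (V t) μ)
    (hident : ∀ t ∈ Finset.Icc 1 T, ∀ i j : ℕ, IdentDistrib (V t i) (V t j) μ μ)
    (P : ℕ → ℝ) (hP : ∀ t, P t = (μ {ω | Vstar ≤ V t 1 ω}).toReal)
    (Phat : ℕ → ℕ → Ω → ℝ)
    (hPhat : ∀ t N ω, Phat t N ω
      = (1 / (N : ℝ)) * ∑ i ∈ Finset.Icc 1 N, (if Vstar ≤ V t i ω then (1 : ℝ) else 0))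
    (S : ℝ) (hS : S = ∑ t ∈ Finset.Icc 1 T, (if P t < δ then (1 : ℝ) else 0))
    (Shat : ℕ → Ω → ℝ)
    (hShat : ∀ N ω, Shat N ω
      = ∑ t ∈ Finset.Icc 1 T, (if Phat t N ω < δ then (1 : ℝ) else 0))
    (η : ℝ) (hη : 0 < η) (N : ℕ) :
    (μ {ω | η < |Shat N ω - S|}).toReal
      ≤ (1 / η) * ∑ t ∈ Finset.Icc 1 T,
          |(μ {ω | Phat t N ω < δ}).toReal - (if P t < δ then (1 : ℝ) else 0)| :=
  empirical_sample_complexity_deviation_bound_general μ T Vstar δ V hmeas P Phat hPhat S hS Shat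
    hShat η hη N
end

section
/- Assume that P_t ≠ δ for every t = 1,…,T. Then the empirical sample complexity is asymptotically unbiased: lim_{N→∞} E[Ŝ^{(N)}] = S. -/
/-!
For each `t`, the strong law of large numbers applied to the indicators `𝟙[V t i ≥ V*]` gives
`P̂ₜ⁽ᴺ⁾ → Pₜ` almost surely. Since `Pₜ ≠ δ`, the map `x ↦ 𝟙[x < δ]` is locally constant at `Pₜ`,
so `𝟙[P̂ₜ⁽ᴺ⁾ < δ] → 𝟙[Pₜ < δ]` almost surely, and bounded convergence carries this over to the
expectations; summing over `t` gives the claim.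
-/

open MeasureTheory ProbabilityTheory Filter Topology Finset

theorem Filter.Tendsto.ite_lt_const {α β M : Type*} [LinearOrder α] [TopologicalSpace α]
    [OrderClosedTopology α] [TopologicalSpace M] {l : Filter β} {f : β → α} {p δ : α}
    (hf : Tendsto f l (𝓝 p)) (hp : p ≠ δ) (a b : M) :
    Tendsto (fun n => if f n < δ then a else b) l (𝓝 (if p < δ then a else b)) := by
  rcases hp.lt_or_gt with h | h
  · rw [if_pos h]
    exact tendsto_const_nhds.congr' <| (hf.eventually_lt_const h).mono fun n hn => (if_pos hn).symm
  · rw [if_neg h.not_gt]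
    exact tendsto_const_nhds.congr' <|
      (hf.eventually_const_lt h).mono fun n hn => (if_neg hn.not_gt).symm

section

variable {Ω E : Type*} [MeasurableSpace Ω] [MeasurableSpace E] {μ : Measure Ω}

theorem strong_law_ae_real_Icc (X : ℕ → Ω → ℝ) (hint : Integrable (X 1) μ)
    (hindep : Pairwise (Function.onFun (IndepFun · · μ) X))
    (hident : ∀ i, IdentDistrib (X i) (X 1) μ μ) :
    ∀ᵐ ω ∂μ, Tendsto (fun N : ℕ => 1 / (N : ℝ) * ∑ i ∈ Icc 1 N, X i ω) atTop (𝓝 μ[X 1]) := by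
  have hshift := strong_law_ae_real (fun i => X (i + 1)) hint
    (fun i j hij => hindep (by omega)) (fun i => hident (i + 1))
  filter_upwards [hshift] with ω hω
  convert hω using 2 with N
  rw [range_eq_Ico, sum_Ico_add' (fun i => X i ω), zero_add, Ico_add_one_right_eq_Icc,
    one_div_mul_eq_div]

noncomputable def empiricalFrequency (V : ℕ → Ω → E) (s : Set E) (N : ℕ) (ω : Ω) : ℝ :=
  1 / (N : ℝ) * ∑ i ∈ Icc 1 N, s.indicator 1 (V i ω)

theorem measurable_empiricalFrequency {V : ℕ → Ω → E} (hmeas : ∀ i, Measurable (V i))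
    {s : Set E} (hs : MeasurableSet s) (N : ℕ) : Measurable (empiricalFrequency V s N) :=
  (Finset.measurable_sum _ fun i _ =>
    (measurable_const.indicator hs).comp (hmeas i)).const_mul _

theorem ae_tendsto_empiricalFrequency [IsFiniteMeasure μ] {V : ℕ → Ω → E}
    (hmeas : ∀ i, Measurable (V i)) (hindep : iIndepFun V μ)
    (hident : ∀ i j, IdentDistrib (V i) (V j) μ μ) {s : Set E} (hs : MeasurableSet s) :
    ∀ᵐ ω ∂μ, Tendsto (fun N => empiricalFrequency V s N ω) atTop (𝓝 (μ.real (V 1 ⁻¹' s))) := by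
  have hf : Measurable (s.indicator (1 : E → ℝ)) := measurable_const.indicator hs
  have hcomp : s.indicator (1 : E → ℝ) ∘ V 1 = (V 1 ⁻¹' s).indicator 1 := rfl
  have hint : Integrable (s.indicator 1 ∘ V 1) μ :=
    hcomp ▸ (integrable_const (1 : ℝ)).indicator (hs.preimage (hmeas 1))
  have hlln := strong_law_ae_real_Icc (fun i => s.indicator 1 ∘ V i) hint
    (fun i j hij => (hindep.indepFun hij).comp hf hf) (fun i => (hident i 1).comp hf)
  rwa [hcomp, integral_indicator_one (hs.preimage (hmeas 1))] at hlln

theorem integrable_ite_lt_const [IsFiniteMeasure μ] {f : Ω → ℝ} (hf : Measurable f) (δ : ℝ) :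
    Integrable (fun ω => if f ω < δ then (1 : ℝ) else 0) μ :=
  .of_bound (Measurable.ite (measurableSet_lt hf measurable_const) measurable_const
    measurable_const).aestronglyMeasurable 1 (ae_of_all _ fun ω => by split_ifs <;> simp)

theorem tendsto_integral_ite_empiricalFrequency_lt [IsProbabilityMeasure μ] {V : ℕ → Ω → E}
    (hmeas : ∀ i, Measurable (V i)) (hindep : iIndepFun V μ)
    (hident : ∀ i j, IdentDistrib (V i) (V j) μ μ) {s : Set E} (hs : MeasurableSet s) {δ : ℝ}
    (hne : μ.real (V 1 ⁻¹' s) ≠ δ) :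
    Tendsto (fun N => ∫ ω, (if empiricalFrequency V s N ω < δ then (1 : ℝ) else 0) ∂μ) atTop
      (𝓝 (if μ.real (V 1 ⁻¹' s) < δ then 1 else 0)) := by
  have hconst := integral_const (μ := μ) (if μ.real (V 1 ⁻¹' s) < δ then (1 : ℝ) else 0)
  rw [probReal_univ, one_smul] at hconst
  rw [← hconst]
  refine tendsto_integral_of_dominated_convergence (fun _ => 1)
    (fun N => (integrable_ite_lt_const (measurable_empiricalFrequency hmeas hs N) δ).1)
    (integrable_const 1) (fun N => ae_of_all _ fun ω => by split_ifs <;> simp) ?_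
  filter_upwards [ae_tendsto_empiricalFrequency hmeas hindep hident hs] with ω hω
  exact hω.ite_lt_const hne 1 0

end

theorem empirical_sample_complexity_asymptotically_unbiased_general
    {Ω : Type*} [MeasurableSpace Ω] (μ : Measure Ω) [IsProbabilityMeasure μ]
    (T : ℕ) (Vstar : ℝ) (δ : ℝ)
    (V : ℕ → ℕ → Ω → ℝ)
    (hmeas : ∀ t i, Measurable (V t i))
    (hindep : ∀ t ∈ Finset.Icc 1 T,
      iIndepFun (V t) μ)
    (hident : ∀ t ∈ Finset.Icc 1 T, ∀ i j : ℕ, IdentDistrib (V t i) (V t j) μ μ)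
    (P : ℕ → ℝ) (hP : ∀ t, P t = (μ {ω | Vstar ≤ V t 1 ω}).toReal)
    (Phat : ℕ → ℕ → Ω → ℝ)
    (hPhat : ∀ t N ω, Phat t N ω
      = (1 / (N : ℝ)) * ∑ i ∈ Finset.Icc 1 N, (if Vstar ≤ V t i ω then (1 : ℝ) else 0))
    (S : ℝ) (hS : S = ∑ t ∈ Finset.Icc 1 T, (if P t < δ then (1 : ℝ) else 0))
    (Shat : ℕ → Ω → ℝ)
    (hShat : ∀ N ω, Shat N ω
      = ∑ t ∈ Finset.Icc 1 T, (if Phat t N ω < δ then (1 : ℝ) else 0))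
    (hne : ∀ t ∈ Finset.Icc 1 T, P t ≠ δ) :
    Tendsto (fun N : ℕ => ∫ ω, Shat N ω ∂μ) atTop (nhds S) := by
  have hPhat_eq : ∀ t, Phat t = empiricalFrequency (V t) (Set.Ici Vstar) := fun t => by
    ext N ω
    simp [hPhat, empiricalFrequency, Set.indicator_apply]
  have hP_eq : ∀ t, P t = μ.real (V t 1 ⁻¹' Set.Ici Vstar) := hP
  have hswap : ∀ N, ∫ ω, Shat N ω ∂μ
      = ∑ t ∈ Icc 1 T, ∫ ω, (if Phat t N ω < δ then (1 : ℝ) else 0) ∂μ := fun N => by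
    simp_rw [hShat]
    refine integral_finsetSum _ fun t _ => integrable_ite_lt_const ?_ δ
    exact hPhat_eq t ▸ measurable_empiricalFrequency (hmeas t) measurableSet_Ici N
  simp_rw [hswap, hS, hPhat_eq, hP_eq]
  refine tendsto_finsetSum _ fun t ht => ?_
  exact tendsto_integral_ite_empiricalFrequency_lt (hmeas t) (hindep t ht) (hident t ht)
    measurableSet_Ici (hP_eq t ▸ hne t ht)

/-- **Asymptotic unbiasedness of the empirical sample complexity.**
With `P t = ℙ(V t 1 ≥ Vstar)`, `P̂ₜ⁽ᴺ⁾ = (1/N) ∑_{i=1}^N 𝟙[V t i ≥ Vstar]`,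
`S = ∑_{t=1}^T 𝟙[P t < δ]`, and `Ŝ⁽ᴺ⁾ = ∑_{t=1}^T 𝟙[P̂ₜ⁽ᴺ⁾ < δ]`, if `P t ≠ δ`
for all `t = 1,…,T`, then `E[Ŝ⁽ᴺ⁾] → S` as `N → ∞`. -/
theorem empirical_sample_complexity_asymptotically_unbiased
    {Ω : Type*} [MeasurableSpace Ω] (μ : Measure Ω) [IsProbabilityMeasure μ]
    (T : ℕ) (Vstar : ℝ) (δ : ℝ) (hδ : δ ∈ Set.Ioc (0 : ℝ) 1)
    (V : ℕ → ℕ → Ω → ℝ)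
    (hmeas : ∀ t i, Measurable (V t i))
    (hindep : ∀ t ∈ Finset.Icc 1 T,
      iIndepFun (V t) μ)
    (hident : ∀ t ∈ Finset.Icc 1 T, ∀ i j : ℕ, IdentDistrib (V t i) (V t j) μ μ)
    (P : ℕ → ℝ) (hP : ∀ t, P t = (μ {ω | Vstar ≤ V t 1 ω}).toReal)
    (Phat : ℕ → ℕ → Ω → ℝ)
    (hPhat : ∀ t N ω, Phat t N ω
      = (1 / (N : ℝ)) * ∑ i ∈ Finset.Icc 1 N, (if Vstar ≤ V t i ω then (1 : ℝ) else 0))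
    (S : ℝ) (hS : S = ∑ t ∈ Finset.Icc 1 T, (if P t < δ then (1 : ℝ) else 0))
    (Shat : ℕ → Ω → ℝ)
    (hShat : ∀ N ω, Shat N ω
      = ∑ t ∈ Finset.Icc 1 T, (if Phat t N ω < δ then (1 : ℝ) else 0))
    (hne : ∀ t ∈ Finset.Icc 1 T, P t ≠ δ) :
    Tendsto (fun N : ℕ => ∫ ω, Shat N ω ∂μ) atTop (nhds S) :=
  empirical_sample_complexity_asymptotically_unbiased_general μ T Vstar δ V hmeas hindep hident P hP
    Phat hPhat S hS Shat hShat hne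
end

section
/- (Far-field expansion of the distance, first order.) Let E be a real inner product space and let R, d ∈ E with ‖R‖ ≥ 2‖d‖ and R ≠ 0. Then 0 ≤ ‖R − d‖ − ‖R‖ + ⟨R, d⟩/‖R‖ ≤ ‖d‖²/‖R‖. -/
open RealInnerProductSpace

/-- **Far-field expansion of the distance, first order.**
In a real inner product space, if `‖R‖ ≥ 2‖d‖` and `R ≠ 0`, then
`0 ≤ ‖R − d‖ − ‖R‖ + ⟪R, d⟫/‖R‖ ≤ ‖d‖²/‖R‖`. -/
theorem far_field_distance_first_order
    {E : Type*} [NormedAddCommGroup E] [InnerProductSpace ℝ E]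
    (R d : E) (h : 2 * ‖d‖ ≤ ‖R‖) (hR : R ≠ 0) :
    0 ≤ ‖R - d‖ - ‖R‖ + ⟪R, d⟫ / ‖R‖ ∧
    ‖R - d‖ - ‖R‖ + ⟪R, d⟫ / ‖R‖ ≤ ‖d‖ ^ 2 / ‖R‖ := by
  have hr : (0:ℝ) < ‖R‖ := norm_pos_iff.mpr hR
  have hd : (0:ℝ) ≤ ‖d‖ := norm_nonneg d
  have hs0 : (0:ℝ) ≤ ‖R - d‖ := norm_nonneg _
  have hs : ‖R - d‖ ^ 2 = ‖R‖ ^ 2 - 2 * ⟪R, d⟫ + ‖d‖ ^ 2 := by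
    rw [@norm_sub_sq_real]
  have hc : |⟪R, d⟫| ≤ ‖R‖ * ‖d‖ := abs_real_inner_le_norm R d
  have hc1 : ⟪R, d⟫ ≤ ‖R‖ * ‖d‖ := (abs_le.mp hc).2
  have hc2 : -(‖R‖ * ‖d‖) ≤ ⟪R, d⟫ := (abs_le.mp hc).1
  have hcsq : ⟪R, d⟫ ^ 2 ≤ ‖R‖ ^ 2 * ‖d‖ ^ 2 := by nlinarith
  have h1 : ‖R‖ ^ 2 - ⟪R, d⟫ ≤ ‖R‖ * ‖R - d‖ := by
    nlinarith [sq_nonneg (‖R‖ * ‖R - d‖ + (‖R‖ ^ 2 - ⟪R, d⟫)), mul_nonneg hr.le hs0,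
      sq_nonneg (‖R‖ - 2 * ‖d‖)]
  have h2 : ‖R‖ * ‖R - d‖ ≤ ‖R‖ ^ 2 - ⟪R, d⟫ + ‖d‖ ^ 2 := by
    nlinarith [sq_nonneg (‖R‖ * ‖R - d‖ + (‖R‖ ^ 2 - ⟪R, d⟫ + ‖d‖ ^ 2)),
      sq_nonneg (⟪R, d⟫ - ‖d‖ ^ 2), mul_nonneg hr.le hs0, sq_nonneg (‖R‖ - 2 * ‖d‖)]
  have e : ‖R - d‖ - ‖R‖ + ⟪R, d⟫ / ‖R‖
      = (‖R‖ * ‖R - d‖ - ‖R‖ ^ 2 + ⟪R, d⟫) / ‖R‖ := by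
    field_simp
  constructor
  · rw [e]
    exact div_nonneg (by linarith) hr.le
  · rw [e]
    gcongr
    linarith
end

section
/- (Far-field expansion of the phase difference between two senders.) Let E be a real inner product space and let R, d_j, d_l ∈ E with ‖R‖ ≥ 2‖d_j‖, ‖R‖ ≥ 2‖d_l‖, and R ≠ 0. Then |(‖R − d_l‖ − ‖R − d_j‖) − ⟨R, d_j − d_l⟩/‖R‖| ≤ (‖d_j‖² + ‖d_l‖²)/‖R‖. -/
open RealInnerProductSpace

private lemma far_field_aux
    {E : Type*} [NormedAddCommGroup E] [InnerProductSpace ℝ E]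
    (R d : E) (h : 2 * ‖d‖ ≤ ‖R‖) (hR : R ≠ 0) :
    |‖R - d‖ - (‖R‖ - ⟪R, d⟫ / ‖R‖)| ≤ ‖d‖ ^ 2 / ‖R‖ := by
  have hr : (0:ℝ) < ‖R‖ := norm_pos_iff.mpr hR
  set r := ‖R‖ with hrdef
  set a := ‖R - d‖ with hadef
  set t := (⟪R, d⟫ : ℝ) with htdef
  have ha2 : a ^ 2 = r ^ 2 - 2 * t + ‖d‖ ^ 2 := by
    have := @norm_sub_sq_real E _ _ R d
    nlinarith [this]
  have hcs : |t| ≤ r * ‖d‖ := abs_real_inner_le_norm R d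
  have hd0 : (0:ℝ) ≤ ‖d‖ := norm_nonneg d
  have ht1 : t / r ≤ ‖d‖ := by
    rw [div_le_iff₀ hr]
    nlinarith [abs_le.mp hcs]
  have hage : r - ‖d‖ ≤ a := norm_sub_norm_le R d
  have hbge : r / 2 ≤ r - t / r := by
    have : ‖d‖ ≤ r / 2 := by linarith
    linarith
  have hsum : r ≤ a + (r - t / r) := by
    have : ‖d‖ ≤ r / 2 := by linarith
    linarith
  have hdiffsq : a ^ 2 - (r - t / r) ^ 2 = ‖d‖ ^ 2 - (t / r) ^ 2 := by
    field_simp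
    ring_nf
    nlinarith [ha2]
  have hts : (t / r) ^ 2 ≤ ‖d‖ ^ 2 := by
    have := sq_abs t
    have h2 : t ^ 2 ≤ (r * ‖d‖) ^ 2 := by
      nlinarith [abs_le.mp hcs, abs_nonneg t]
    rw [div_pow, div_le_iff₀ (by positivity)]
    nlinarith
  have habs : |a ^ 2 - (r - t / r) ^ 2| ≤ ‖d‖ ^ 2 := by
    rw [abs_le]
    constructor
    · nlinarith
    · nlinarith
  have key : |a - (r - t / r)| * r ≤ ‖d‖ ^ 2 := by
    have h1 : |a - (r - t/r)| * (a + (r - t/r)) = |a ^ 2 - (r - t/r) ^ 2| := by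
      rw [← abs_of_nonneg (show (0:ℝ) ≤ a + (r - t/r) by linarith), ← abs_mul]
      ring_nf
    have h2 : |a - (r - t/r)| * r ≤ |a - (r - t/r)| * (a + (r - t/r)) :=
      mul_le_mul_of_nonneg_left hsum (abs_nonneg _)
    linarith [h1 ▸ h2, habs]
  rw [le_div_iff₀ hr]
  linarith

/-- **Far-field expansion of the phase difference between two senders.**
In a real inner product space, if `‖R‖ ≥ 2‖d_j‖`, `‖R‖ ≥ 2‖d_l‖` and `R ≠ 0`,
then `|(‖R − d_l‖ − ‖R − d_j‖) − ⟪R, d_j − d_l⟫/‖R‖| ≤ (‖d_j‖² + ‖d_l‖²)/‖R‖`. -/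
theorem far_field_phase_difference
    {E : Type*} [NormedAddCommGroup E] [InnerProductSpace ℝ E]
    (R dj dl : E) (hj : 2 * ‖dj‖ ≤ ‖R‖) (hl : 2 * ‖dl‖ ≤ ‖R‖) (hR : R ≠ 0) :
    |(‖R - dl‖ - ‖R - dj‖) - ⟪R, dj - dl⟫ / ‖R‖| ≤ (‖dj‖ ^ 2 + ‖dl‖ ^ 2) / ‖R‖ := by
  have hr : (0:ℝ) < ‖R‖ := norm_pos_iff.mpr hR
  have hj' := far_field_aux R dj hj hR
  have hl' := far_field_aux R dl hl hR
  have hinner : (⟪R, dj - dl⟫ : ℝ) = ⟪R, dj⟫ - ⟪R, dl⟫ := inner_sub_right R dj dl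
  have hsplit :
      (‖R - dl‖ - ‖R - dj‖) - ⟪R, dj - dl⟫ / ‖R‖ =
        (‖R - dl‖ - (‖R‖ - ⟪R, dl⟫ / ‖R‖)) - (‖R - dj‖ - (‖R‖ - ⟪R, dj⟫ / ‖R‖)) := by
    rw [hinner]
    field_simp
    ring
  rw [hsplit]
  calc |(‖R - dl‖ - (‖R‖ - ⟪R, dl⟫ / ‖R‖)) - (‖R - dj‖ - (‖R‖ - ⟪R, dj⟫ / ‖R‖))|
      ≤ |‖R - dl‖ - (‖R‖ - ⟪R, dl⟫ / ‖R‖)| + |‖R - dj‖ - (‖R‖ - ⟪R, dj⟫ / ‖R‖)| :=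
        abs_sub _ _
    _ ≤ ‖dl‖ ^ 2 / ‖R‖ + ‖dj‖ ^ 2 / ‖R‖ := add_le_add hl' hj'
    _ = (‖dj‖ ^ 2 + ‖dl‖ ^ 2) / ‖R‖ := by ring
end
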